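/- Assume n ≥ 1/c > 2/p_0. In any pure Nash equilibrium of a position-optimization game, every player's utility lies in the interval [ (1/n)·⌊cn⌋/(⌊cn⌋+1), (1/n)·(⌊cn⌋+1)/⌊cn⌋ ]. -/
import Mathlib


open Finset
open scoped ENNReal Classical

noncomputable def closestSet {X Y : Type*} {n : ℕ} (d : X → Y → ℝ≥0∞) (xs : Fin n → X)
    (y : Y) : Finset (Fin n) :=
  Finset.univ.filter fun i => ∀ j, d (xs i) y ≤ d (xs j) y

/-- Player `i`'s share of target `y`: `1/|X_min|` if `i` is among the closest players, else 0. -/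
noncomputable def share {X Y : Type*} {n : ℕ} (d : X → Y → ℝ≥0∞) (xs : Fin n → X) (y : Y)
    (i : Fin n) : ℝ :=
  if i ∈ closestSet d xs y then ((closestSet d xs y).card : ℝ)⁻¹ else 0

/-- Player `i`'s expected utility `E_{y∼Q}[π_i]`. -/
noncomputable def utility {X Y : Type*} [Fintype Y] {n : ℕ} (d : X → Y → ℝ≥0∞) (Q : Y → ℝ)
    (xs : Fin n → X) (i : Fin n) : ℝ :=
  ∑ y, Q y * share d xs y i

/-- Pure Nash equilibrium: no unilateral pure deviation strictly improves utility. -/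
def IsPureNash {X Y : Type*} [Fintype Y] {n : ℕ} (d : X → Y → ℝ≥0∞) (Q : Y → ℝ)
    (xs : Fin n → X) : Prop :=
  ∀ (i : Fin n) (x' : X), utility d Q (Function.update xs i x') i ≤ utility d Q xs i

/-- The projection `P` of `Q` onto pseudo-targets: `P x = Q({y : x*(y) = x})`. -/
noncomputable def projP {X Y : Type*} [Fintype Y] (Q : Y → ℝ) (xstar : Y → X) (x : X) : ℝ :=
  ∑ y ∈ Finset.univ.filter (fun y => xstar y = x), Q y

/-- Number of players playing position `x`. -/
noncomputable def kcount {X : Type*} {n : ℕ} (xs : Fin n → X) (x : X) : ℕ :=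
  (Finset.univ.filter (fun i => xs i = x)).card

section Aux


variable {X Y : Type*} [Fintype Y] {n : ℕ} (d : X → Y → ℝ≥0∞) (Q : Y → ℝ) (xstar : Y → X)

lemma share_nonneg (xs : Fin n → X) (y : Y) (i : Fin n) : 0 ≤ share d xs y i := by
  unfold share; split <;> positivity

lemma closest_eq (xs : Fin n → X)
    (hmin : ∀ y x', d (xstar y) y ≤ d x' y)
    (huniq : ∀ y, Q y ≠ 0 → ∀ x', d x' y ≤ d (xstar y) y → x' = xstar y)
    {y : Y} (hy : Q y ≠ 0) {j0 : Fin n} (hj0 : xs j0 = xstar y) :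
    closestSet d xs y = Finset.univ.filter (fun i => xs i = xstar y) := by
  ext i
  simp only [closestSet, mem_filter, mem_univ, true_and]
  constructor
  · intro h
    exact huniq y hy _ (by simpa [hj0] using h j0)
  · intro h j
    rw [h]; exact hmin y _

lemma kcount_pos (xs : Fin n → X) (i : Fin n) : 0 < kcount xs (xs i) := by
  apply Finset.card_pos.2 ⟨i, by simp [mem_filter]⟩

lemma sum_share_le (xs : Fin n → X) (y : Y) : ∑ i, share d xs y i ≤ 1 := by
  unfold share
  rw [Finset.sum_ite_mem, Finset.univ_inter, Finset.sum_const, nsmul_eq_mul]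
  rcases Nat.eq_zero_or_pos (closestSet d xs y).card with h | h
  · simp [h]
  · rw [mul_inv_cancel₀ (by positivity)]

lemma sum_share_eq (xs : Fin n → X) (hn : 0 < n) (y : Y) : ∑ i, share d xs y i = 1 := by
  unfold share
  rw [Finset.sum_ite_mem, Finset.univ_inter, Finset.sum_const, nsmul_eq_mul]
  have : (closestSet d xs y).Nonempty := by
    obtain ⟨i, -, hi⟩ := Finset.exists_min_image Finset.univ (fun i => d (xs i) y)
      (Finset.univ_nonempty_iff.2 (⟨⟨0, hn⟩⟩))
    exact ⟨i, by simp [closestSet, fun j => hi j (Finset.mem_univ j)]⟩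
  have h : 0 < (closestSet d xs y).card := Finset.card_pos.2 this
  rw [mul_inv_cancel₀ (by positivity)]

lemma utility_nonneg (xs : Fin n → X) (hQ : ∀ y, 0 ≤ Q y) (i : Fin n) :
    0 ≤ utility d Q xs i :=
  Finset.sum_nonneg fun y _ => mul_nonneg (hQ y) (share_nonneg d xs y i)

lemma total_utility (xs : Fin n → X) (hn : 0 < n) (hQsum : ∑ y, Q y = 1) :
    ∑ i, utility d Q xs i = 1 := by
  unfold utility
  rw [Finset.sum_comm]
  calc ∑ y, ∑ i, Q y * share d xs y i = ∑ y, Q y * ∑ i, share d xs y i := by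
        simp [Finset.mul_sum]
    _ = 1 := by simp [sum_share_eq d xs hn, hQsum]

/-- Deviation lower bound. -/
lemma deviation_lb (xs : Fin n → X) (hQ : ∀ y, 0 ≤ Q y)
    (hmin : ∀ y x', d (xstar y) y ≤ d x' y)
    (huniq : ∀ y, Q y ≠ 0 → ∀ x', d x' y ≤ d (xstar y) y → x' = xstar y)
    (i : Fin n) (x' : X) :
    projP Q xstar x' / (kcount xs x' + 1) ≤ utility d Q (Function.update xs i x') i := by
  classical
  set xs' := Function.update xs i x' with hxs'
  have hxi : xs' i = x' := Function.update_self i x' xs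
  have hsub : Finset.univ.filter (fun j => xs' j = x') ⊆
      insert i (Finset.univ.filter (fun j => xs j = x')) := by
    intro j hj
    simp only [mem_filter, mem_univ, true_and] at hj
    by_cases h : j = i
    · simp [h]
    · simp only [Finset.mem_insert, mem_filter, mem_univ, true_and]
      right
      rwa [hxs', Function.update_of_ne h] at hj
  have hcard : (kcount xs' x' : ℝ) ≤ kcount xs x' + 1 := by
    have := Finset.card_le_card hsub
    have h2 := Finset.card_insert_le i (Finset.univ.filter (fun j => xs j = x'))
    unfold kcount
    exact_mod_cast le_trans this h2
  have hk'pos : 0 < kcount xs' x' := by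
    apply Finset.card_pos.2 ⟨i, by simp [mem_filter, hxi]⟩
  have key : ∀ y ∈ Finset.univ.filter (fun y => xstar y = x'),
      Q y * (kcount xs x' + 1 : ℝ)⁻¹ ≤ Q y * share d xs' y i := by
    intro y hy
    simp only [mem_filter, mem_univ, true_and] at hy
    rcases eq_or_ne (Q y) 0 with h0 | h0
    · simp [h0]
    · have hcl := closest_eq d Q xstar xs' hmin huniq h0 (by rw [hxi, hy])
      have hmem : i ∈ closestSet d xs' y := by
        rw [hcl]; simp [mem_filter, hxi, hy]
      have hcardeq : (closestSet d xs' y).card = kcount xs' x' := by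
        rw [hcl]; unfold kcount; rw [hy]
      rw [share, if_pos hmem, hcardeq]
      apply mul_le_mul_of_nonneg_left _ (hQ y)
      apply inv_anti₀ (by exact_mod_cast hk'pos) hcard
  calc projP Q xstar x' / (kcount xs x' + 1)
      = ∑ y ∈ Finset.univ.filter (fun y => xstar y = x'),
          Q y * (kcount xs x' + 1 : ℝ)⁻¹ := by
        rw [← Finset.sum_mul, div_eq_mul_inv]; rfl
    _ ≤ ∑ y ∈ Finset.univ.filter (fun y => xstar y = x'),
          Q y * share d xs' y i := Finset.sum_le_sum key
    _ ≤ ∑ y, Q y * share d xs' y i := by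
        apply Finset.sum_le_sum_of_subset_of_nonneg (Finset.filter_subset _ _)
        intro y _ _
        exact mul_nonneg (hQ y) (share_nonneg d xs' y i)
    _ = utility d Q xs' i := rfl

/-- Utility formula under full occupancy. -/
lemma utility_formula (xs : Fin n → X) (hQ : ∀ y, 0 ≤ Q y)
    (hmin : ∀ y x', d (xstar y) y ≤ d x' y)
    (huniq : ∀ y, Q y ≠ 0 → ∀ x', d x' y ≤ d (xstar y) y → x' = xstar y)
    (hocc : ∀ y, Q y ≠ 0 → ∃ j, xs j = xstar y) (i : Fin n) :
    utility d Q xs i = projP Q xstar (xs i) / kcount xs (xs i) := by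
  classical
  have key : ∀ y, Q y * share d xs y i =
      Q y * (if xstar y = xs i then (kcount xs (xs i) : ℝ)⁻¹ else 0) := by
    intro y
    rcases eq_or_ne (Q y) 0 with h0 | h0
    · simp [h0]
    · obtain ⟨j, hj⟩ := hocc y h0
      have hcl := closest_eq d Q xstar xs hmin huniq h0 hj
      congr 1
      rw [share, hcl]
      by_cases hxi : xs i = xstar y
      · rw [if_pos (by simp [mem_filter, hxi]), if_pos hxi.symm]
        unfold kcount
        rw [hxi]
      · rw [if_neg (by simp [mem_filter, hxi]), if_neg (fun h => hxi h.symm)]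
  calc utility d Q xs i = ∑ y, Q y * (if xstar y = xs i then (kcount xs (xs i) : ℝ)⁻¹ else 0) :=
        Finset.sum_congr rfl fun y _ => key y
    _ = ∑ y ∈ Finset.univ.filter (fun y => xstar y = xs i), Q y * (kcount xs (xs i) : ℝ)⁻¹ := by
        rw [Finset.sum_filter]
        apply Finset.sum_congr rfl
        intro y _
        split <;> simp
    _ = projP Q xstar (xs i) / kcount xs (xs i) := by
        rw [← Finset.sum_mul, div_eq_mul_inv]; rfl

end Aux

set_option maxHeartbeats 1000000 in
/-- if `n ≥ 1/c > 2/p₀`, in any pure Nash equilibrium every player's utility lies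
in `[(1/n)·⌊cn⌋/(⌊cn⌋+1), (1/n)·(⌊cn⌋+1)/⌊cn⌋]`. -/
theorem pure_nash_utility_interval {X Y : Type*} [Fintype Y] {n : ℕ}
    (d : X → Y → ℝ≥0∞) (Q : Y → ℝ) (hQ : ∀ y, 0 ≤ Q y) (hQsum : ∑ y, Q y = 1)
    (xstar : Y → X)
    (hmin : ∀ y x', d (xstar y) y ≤ d x' y)
    (huniq : ∀ y, Q y ≠ 0 → ∀ x', d x' y ≤ d (xstar y) y → x' = xstar y)
    (p0 : ℝ) (hp0pos : 0 < p0)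
    (hp0le : ∀ y, p0 ≤ projP Q xstar (xstar y))
    (hp0mem : ∃ y, projP Q xstar (xstar y) = p0)
    (c : ℝ) (hc : 2 / p0 < 1 / c) (hcn : 1 / c ≤ n) (hcpos : 0 < c)
    (xs : Fin n → X) (hnash : IsPureNash d Q xs) :
    ∀ i, utility d Q xs i ∈
      Set.Icc ((1 / n) * ((⌊c * n⌋₊ : ℝ) / (⌊c * n⌋₊ + 1)))
        ((1 / n) * (((⌊c * n⌋₊ : ℝ) + 1) / ⌊c * n⌋₊)) := by
  intro i
  have hcinv : (0:ℝ) < 1 / c := by positivity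
  have hnposR : (0:ℝ) < n := lt_of_lt_of_le hcinv hcn
  have hn : 0 < n := by exact_mod_cast hnposR
  have hcn1 : (1:ℝ) ≤ c * n := by
    rw [div_le_iff₀ hcpos] at hcn; linarith
  have hm1 : 1 ≤ ⌊c * (n:ℝ)⌋₊ := Nat.le_floor (by exact_mod_cast hcn1)
  have hmle : ((⌊c * (n:ℝ)⌋₊ : ℕ) : ℝ) ≤ c * n := Nat.floor_le (by positivity)
  have h2c : 2 * c < p0 := by
    rw [div_lt_div_iff₀ hp0pos hcpos] at hc; linarith
  have hp0n : 2 < (n:ℝ) * p0 := by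
    have h : 2 / p0 < (n:ℝ) := lt_of_lt_of_le hc hcn
    rw [div_lt_iff₀ hp0pos] at h; linarith
  have htot := total_utility d Q xs hn hQsum
  -- a player with utility at most 1/n
  obtain ⟨i0, hi0⟩ : ∃ i0, utility d Q xs i0 ≤ 1 / n := by
    by_contra h
    push_neg at h
    have hlt : ∑ _j : Fin n, (1 / (n:ℝ)) < ∑ j, utility d Q xs j :=
      Finset.sum_lt_sum_of_nonempty (Finset.univ_nonempty_iff.2 ⟨⟨0, hn⟩⟩)
        (fun j _ => h j)
    rw [htot, Finset.sum_const, card_univ, Fintype.card_fin, nsmul_eq_mul,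
      mul_one_div, div_self (ne_of_gt hnposR)] at hlt
    exact lt_irrefl _ hlt
  -- full occupancy
  have hocc : ∀ y, Q y ≠ 0 → ∃ j, xs j = xstar y := by
    intro y hy
    by_contra hno
    push_neg at hno
    have hk0 : kcount xs (xstar y) = 0 := by
      unfold kcount
      rw [Finset.card_eq_zero, Finset.filter_eq_empty_iff]
      intro j _; exact hno j
    have hle := le_trans (deviation_lb d Q xstar xs hQ hmin huniq i0 (xstar y))
      (le_trans (hnash i0 (xstar y)) hi0)
    rw [hk0] at hle
    simp only [Nat.cast_zero, zero_add, div_one] at hle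
    have h1 : p0 ≤ 1 / n := le_trans (hp0le y) hle
    rw [le_div_iff₀ hnposR] at h1
    nlinarith
  -- crowding bound at occupied pseudo-target positions
  have hkbound : ∀ y, Q y ≠ 0 → ⌊c * (n:ℝ)⌋₊ + 1 ≤ kcount xs (xstar y) := by
    intro y hy
    have hle := le_trans (deviation_lb d Q xstar xs hQ hmin huniq i0 (xstar y))
      (le_trans (hnash i0 (xstar y)) hi0)
    have hkpos : (0:ℝ) < (kcount xs (xstar y) : ℝ) + 1 := by positivity
    rw [div_le_div_iff₀ hkpos hnposR] at hle
    have hp := hp0le y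
    have h2 : 2 * ((⌊c * (n:ℝ)⌋₊ : ℕ) : ℝ) < (kcount xs (xstar y) : ℝ) + 1 := by nlinarith
    have h3 : 2 * ⌊c * (n:ℝ)⌋₊ < kcount xs (xstar y) + 1 := by exact_mod_cast
      (by push_cast; linarith :
        ((2 * ⌊c * (n:ℝ)⌋₊ : ℕ) : ℝ) < ((kcount xs (xstar y) + 1 : ℕ) : ℝ))
    omega
  -- dichotomy
  have hdich : ∀ z : X, projP Q xstar z = 0 ∨ ⌊c * (n:ℝ)⌋₊ + 1 ≤ kcount xs z := by
    intro z
    by_cases h : ∃ y, Q y ≠ 0 ∧ xstar y = z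
    · obtain ⟨y, hy, hyz⟩ := h
      exact Or.inr (hyz ▸ hkbound y hy)
    · push_neg at h
      left
      unfold projP
      apply Finset.sum_eq_zero
      intro y hy
      simp only [mem_filter, mem_univ, true_and] at hy
      by_contra hq
      exact (h y hq) hy
  have huf : ∀ j, utility d Q xs j = projP Q xstar (xs j) / kcount xs (xs j) :=
    fun j => utility_formula d Q xstar xs hQ hmin huniq hocc j
  have hprojnn : ∀ z : X, 0 ≤ projP Q xstar z :=
    fun z => Finset.sum_nonneg fun y _ => hQ y
  have hu_nonneg : 0 ≤ utility d Q xs i := utility_nonneg d Q xs hQ i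
  -- player i's position is crowded
  have hki : ⌊c * (n:ℝ)⌋₊ + 1 ≤ kcount xs (xs i) := by
    rcases hdich (xs i) with h0 | h
    · exfalso
      obtain ⟨y1, hy1⟩ := hp0mem
      have hdev := le_trans (deviation_lb d Q xstar xs hQ hmin huniq i (xstar y1))
        (hnash i (xstar y1))
      rw [huf i, h0, zero_div, hy1] at hdev
      have hpos : (0:ℝ) < p0 / ((kcount xs (xstar y1) : ℝ) + 1) := by positivity
      linarith
    · exact h
  -- abstract real variables
  obtain ⟨M, hM⟩ : ∃ M : ℝ, ((⌊c * (n:ℝ)⌋₊ : ℕ) : ℝ) = M := ⟨_, rfl⟩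
  obtain ⟨K, hK⟩ : ∃ K : ℝ, ((kcount xs (xs i) : ℕ) : ℝ) = K := ⟨_, rfl⟩
  obtain ⟨P, hP⟩ : ∃ P : ℝ, projP Q xstar (xs i) = P := ⟨_, rfl⟩
  have hM1 : (1:ℝ) ≤ M := by rw [← hM]; exact_mod_cast hm1
  have hMpos : (0:ℝ) < M := by linarith
  have hKM : M + 1 ≤ K := by rw [← hM, ← hK]; exact_mod_cast hki
  have hKpos : (0:ℝ) < K := by linarith
  have hu_eq : utility d Q xs i = P / K := by rw [huf i, hP, hK]
  rw [Set.mem_Icc, hM]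
  constructor
  · -- lower bound
    have hlow_each : ∀ j, utility d Q xs j ≤ utility d Q xs i * ((M + 2) / (M + 1)) := by
      intro j
      rcases hdich (xs j) with h0 | hkj
      · rw [huf j, h0, zero_div]; positivity
      · have hdev := le_trans (deviation_lb d Q xstar xs hQ hmin huniq i (xs j))
          (hnash i (xs j))
        rw [huf j]
        obtain ⟨Kj, hKj⟩ : ∃ Kj : ℝ, ((kcount xs (xs j) : ℕ) : ℝ) = Kj := ⟨_, rfl⟩
        rw [hKj] at hdev ⊢
        have hKjM : M + 1 ≤ Kj := by rw [← hM, ← hKj]; exact_mod_cast hkj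
        have hKjpos : (0:ℝ) < Kj := by linarith
        have heq : projP Q xstar (xs j) / Kj
            = (projP Q xstar (xs j) / (Kj + 1)) * ((Kj + 1) / Kj) := by
          field_simp
        rw [heq]
        apply mul_le_mul hdev ?_ (by positivity) hu_nonneg
        rw [div_le_div_iff₀ hKjpos (by linarith : (0:ℝ) < M + 1)]
        nlinarith
    have hsum_low : 1 ≤ (n:ℝ) * (utility d Q xs i * ((M + 2) / (M + 1))) := by
      calc (1:ℝ) = ∑ j, utility d Q xs j := htot.symm
        _ ≤ ∑ _j : Fin n, utility d Q xs i * ((M + 2) / (M + 1)) :=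
            Finset.sum_le_sum fun j _ => hlow_each j
        _ = (n:ℝ) * (utility d Q xs i * ((M + 2) / (M + 1))) := by
            rw [Finset.sum_const, card_univ, Fintype.card_fin, nsmul_eq_mul]
    have h1 : M + 1 ≤ (n:ℝ) * utility d Q xs i * (M + 2) := by
      rw [show (n:ℝ) * (utility d Q xs i * ((M + 2) / (M + 1)))
          = ((n:ℝ) * utility d Q xs i * (M + 2)) / (M + 1) by ring,
        le_div_iff₀ (by linarith : (0:ℝ) < M + 1)] at hsum_low
      linarith
    have h2 : M * (M + 2) ≤ ((n:ℝ) * utility d Q xs i * (M + 1)) * (M + 2) := by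
      nlinarith
    have h3 : M ≤ (n:ℝ) * utility d Q xs i * (M + 1) :=
      le_of_mul_le_mul_right h2 (by linarith)
    rw [show (1 / (n:ℝ)) * (M / (M + 1)) = M / ((n:ℝ) * (M + 1)) by
      rw [div_mul_div_comm, one_mul]]
    rw [div_le_iff₀ (by positivity)]
    nlinarith [h3]
  · -- upper bound
    have hupper_each : ∀ j, P / (K + 1) ≤ utility d Q xs j := by
      intro j
      have := le_trans (deviation_lb d Q xstar xs hQ hmin huniq j (xs i))
        (hnash j (xs i))
      rwa [hP, hK] at this
    have hsum_up : (n:ℝ) * (P / (K + 1)) ≤ 1 := by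
      calc (n:ℝ) * (P / (K + 1)) = ∑ _j : Fin n, P / (K + 1) := by
            rw [Finset.sum_const, card_univ, Fintype.card_fin, nsmul_eq_mul]
        _ ≤ ∑ j, utility d Q xs j := Finset.sum_le_sum fun j _ => hupper_each j
        _ = 1 := htot
    have hPin : (n:ℝ) * P ≤ K + 1 := by
      rw [← mul_div_assoc, div_le_one (by positivity)] at hsum_up
      exact hsum_up
    have hPnn : 0 ≤ P := hP ▸ hprojnn (xs i)
    have e2 : (utility d Q xs i * ((n:ℝ) * M)) * K ≤ (M + 1) * K := by
      have e1 : (utility d Q xs i * ((n:ℝ) * M)) * K = ((n:ℝ) * P) * M := by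
        rw [hu_eq]; field_simp
      rw [e1]
      nlinarith
    have e3 : utility d Q xs i * ((n:ℝ) * M) ≤ M + 1 :=
      le_of_mul_le_mul_right e2 hKpos
    rw [show (1 / (n:ℝ)) * ((M + 1) / M) = (M + 1) / ((n:ℝ) * M) by
      rw [div_mul_div_comm, one_mul]]
    rw [le_div_iff₀ (by positivity)]
    linarith
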